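/- The pure cactus group PJ₃ is isomorphic to the additive group of integers ℤ; explicitly, the map ℤ → PJ₃ sending j to (s₁₂·s₁₃)^{3j} is a group isomorphism onto PJ₃. -/

import Mathlib

/-!
Since `s₂₃ = s₁₃ s₁₂ s₁₃⁻¹`, the group `J₃` is generated by the two involutions `s₁₂` and `s₁₃`,
so every element is a "rotation" `tⁿ` or a "reflection" `tⁿ s₁₂`, where `t = s₁₂ s₁₃`.
Sending `s₁₂, s₁₃, s₂₃` to the reflections `sr 0, sr 1, sr 2` of the infinite dihedral group
maps `t` to the rotation `r 1`, so `t` has infinite order. Under `π` the element `t` becomes a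
3-cycle and every `tⁿ s₁₂` an odd permutation, hence `ker π` consists exactly of the `t^(3j)`.
-/

/-- Generators of the cactus group `J₃`. -/
inductive CactusGen : Type
  | s12 | s23 | s13
  deriving DecidableEq

open FreeGroup in
/-- Relators of the cactus group `J₃`:
`s₁₂² = s₂₃² = s₁₃² = 1`, `s₁₂·s₁₃ = s₁₃·s₂₃`, `s₂₃·s₁₃ = s₁₃·s₁₂`. -/
def cactusRels : Set (FreeGroup CactusGen) :=
  { of .s12 * of .s12,
    of .s23 * of .s23,
    of .s13 * of .s13,
    of .s12 * of .s13 * (of .s13 * of .s23)⁻¹,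
    of .s23 * of .s13 * (of .s13 * of .s12)⁻¹ }

/-- The cactus group `J₃` as a presented group. -/
abbrev J3 : Type := PresentedGroup cactusRels

def s12 : J3 := PresentedGroup.of .s12
def s23 : J3 := PresentedGroup.of .s23
def s13 : J3 := PresentedGroup.of .s13

/-- The images of the generators in the symmetric group on three letters:
`s₁₂ ↦ (1 2)`, `s₂₃ ↦ (2 3)`, `s₁₃ ↦ (1 3)`. -/
def genPerm : CactusGen → Equiv.Perm (Fin 3)
  | .s12 => Equiv.swap 0 1
  | .s23 => Equiv.swap 1 2
  | .s13 => Equiv.swap 0 2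

theorem cactusRels_hold : ∀ r ∈ cactusRels, FreeGroup.lift genPerm r = 1 := by
  intro r hr
  simp only [cactusRels, Set.mem_insert_iff, Set.mem_singleton_iff] at hr
  rcases hr with h | h | h | h | h <;> subst h <;>
    simp only [map_mul, map_inv, FreeGroup.lift_apply_of] <;> decide

/-- The canonical projection `π : J₃ → S₃`; its kernel is the pure cactus group `PJ₃`. -/
def piJ3 : J3 →* Equiv.Perm (Fin 3) := PresentedGroup.toGroup cactusRels_hold


section Involutions

variable {G : Type*} [Group G] {a b : G}

lemma semiconjBy_mul_inv_of_mul_self_eq_one (ha : a * a = 1) (hb : b * b = 1) :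
    SemiconjBy a (a * b) (a * b)⁻¹ := by
  rw [SemiconjBy, mul_inv_rev, inv_eq_of_mul_eq_one_right ha, inv_eq_of_mul_eq_one_right hb,
    mul_assoc, ← mul_assoc a a b, ha, one_mul, mul_one]

lemma exists_zpow_or_zpow_mul_of_mem_closure_pair (ha : a * a = 1) (hb : b * b = 1) {x : G}
    (hx : x ∈ Subgroup.closure {a, b}) : ∃ n : ℤ, x = (a * b) ^ n ∨ x = (a * b) ^ n * a := by
  set P : G → Prop := fun y ↦ ∃ n : ℤ, y = (a * b) ^ n ∨ y = (a * b) ^ n * a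
  have hconj (n : ℤ) : a * (a * b) ^ n = (a * b) ^ (-n) * a := by
    rw [(semiconjBy_mul_inv_of_mul_self_eq_one ha hb).zpow_right n, inv_zpow, zpow_neg]
  have mul_a {y : G} : P y → P (a * y) := by
    rintro ⟨n, rfl | rfl⟩
    · exact ⟨-n, .inr (hconj n)⟩
    · exact ⟨-n, .inl (by rw [← mul_assoc, hconj, mul_assoc, ha, mul_one])⟩
  have mul_ab {y : G} : P y → P (a * b * y) := by
    rintro ⟨n, rfl | rfl⟩
    · exact ⟨1 + n, .inl (zpow_one_add _ n).symm⟩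
    · exact ⟨1 + n, .inr (by rw [← mul_assoc, zpow_one_add])⟩
  have mul_gen {x y : G} (hx : x ∈ ({a, b} : Set G)) (hy : P y) : P (x * y) := by
    rcases hx with rfl | rfl
    · exact mul_a hy
    · simpa only [← mul_assoc, ha, one_mul] using mul_a (mul_ab hy)
  induction hx using Subgroup.closure_induction_left with
  | one => exact ⟨0, .inl (zpow_zero _).symm⟩
  | mul_left x hx y _ ih => exact mul_gen hx ih
  | inv_mul_cancel x hx y _ ih =>
    rcases hx with rfl | rfl
    · rw [inv_eq_of_mul_eq_one_right ha]; exact mul_a ih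
    · rw [inv_eq_of_mul_eq_one_right hb]; exact mul_gen (.inr rfl) ih

end Involutions

lemma s12_mul_self : s12 * s12 = 1 := PresentedGroup.one_of_mem (by simp [cactusRels])

lemma s13_mul_self : s13 * s13 = 1 := PresentedGroup.one_of_mem (by simp [cactusRels])

lemma s23_mul_s13 : s23 * s13 = s13 * s12 :=
  PresentedGroup.mk_eq_mk_of_mul_inv_mem (by simp [cactusRels])

lemma closure_s12_s13 : Subgroup.closure {s12, s13} = ⊤ := by
  refine eq_top_iff.2 fun x _ ↦ PresentedGroup.generated_by _ _ (fun i ↦ ?_) x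
  have hs12 : s12 ∈ Subgroup.closure {s12, s13} := Subgroup.subset_closure (.inl rfl)
  have hs13 : s13 ∈ Subgroup.closure {s12, s13} := Subgroup.subset_closure (.inr rfl)
  cases i
  · exact hs12
  · rw [← s23, eq_mul_inv_of_mul_eq s23_mul_s13]
    exact mul_mem (mul_mem hs13 hs12) (inv_mem hs13)
  · exact hs13

lemma exists_zpow_or_zpow_mul_s12 (x : J3) :
    ∃ n : ℤ, x = (s12 * s13) ^ n ∨ x = (s12 * s13) ^ n * s12 :=
  exists_zpow_or_zpow_mul_of_mem_closure_pair s12_mul_self s13_mul_self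
    (closure_s12_s13 ▸ Subgroup.mem_top x)

def genDihedral : CactusGen → DihedralGroup 0
  | .s12 => .sr 0
  | .s13 => .sr 1
  | .s23 => .sr 2

lemma cactusRels_hold_genDihedral : ∀ r ∈ cactusRels, FreeGroup.lift genDihedral r = 1 := by
  intro r hr
  simp only [cactusRels, Set.mem_insert_iff, Set.mem_singleton_iff] at hr
  rcases hr with rfl | rfl | rfl | rfl | rfl <;>
    simp only [map_mul, map_inv, FreeGroup.lift_apply_of] <;> decide

def toDihedral : J3 →* DihedralGroup 0 := PresentedGroup.toGroup cactusRels_hold_genDihedral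

lemma toDihedral_s12_mul_s13 : toDihedral (s12 * s13) = .r 1 := by
  rw [map_mul, s12, s13, toDihedral, PresentedGroup.toGroup.of, PresentedGroup.toGroup.of]
  rfl

lemma piJ3_s12 : piJ3 s12 = Equiv.swap 0 1 := PresentedGroup.toGroup.of _

lemma piJ3_s13 : piJ3 s13 = Equiv.swap 0 2 := PresentedGroup.toGroup.of _

lemma zpow_s12_mul_s13_injective : Function.Injective fun n : ℤ ↦ (s12 * s13) ^ n := by
  refine injective_zpow_iff_not_isOfFinOrder.2 fun h ↦ ?_
  simpa [toDihedral_s12_mul_s13] using (toDihedral.isOfFinOrder h).orderOf_pos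

lemma zpow_s12_mul_s13_mem_ker_piJ3_iff (n : ℤ) :
    (s12 * s13) ^ n ∈ MonoidHom.ker piJ3 ↔ 3 ∣ n := by
  have h3 : orderOf (piJ3 (s12 * s13)) = 3 := by
    rw [map_mul, piJ3_s12, piJ3_s13]; exact orderOf_eq_prime (by decide) (by decide)
  rw [MonoidHom.mem_ker, map_zpow, ← orderOf_dvd_iff_zpow_eq_one, h3, Nat.cast_ofNat]

lemma zpow_s12_mul_s13_mul_s12_notMem_ker_piJ3 (n : ℤ) :
    (s12 * s13) ^ n * s12 ∉ MonoidHom.ker piJ3 := by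
  rw [MonoidHom.mem_ker, map_mul, map_zpow, map_mul, piJ3_s12, piJ3_s13]
  intro h
  simpa using congrArg Equiv.Perm.sign h

/-- `PJ₃ ≅ ℤ`; explicitly, `j ↦ (s₁₂·s₁₃)^{3j}` is a group isomorphism from
the additive group `ℤ` onto `PJ₃ = ker π`. -/
theorem PJ3_iso_int :
    ∃ f : ℤ → MonoidHom.ker piJ3,
      (∀ j : ℤ, (f j : J3) = (s12 * s13) ^ (3 * j)) ∧
        Function.Bijective f ∧ ∀ i j : ℤ, f (i + j) = f i * f j := by
  refine ⟨fun j ↦ ⟨_, (zpow_s12_mul_s13_mem_ker_piJ3_iff _).2 (dvd_mul_right 3 j)⟩,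
    fun _ ↦ rfl, ⟨fun i j h ↦ ?_, fun ⟨x, hx⟩ ↦ ?_⟩, fun i j ↦ ?_⟩
  · exact mul_left_cancel₀ three_ne_zero (zpow_s12_mul_s13_injective (congrArg Subtype.val h))
  · obtain ⟨n, rfl | rfl⟩ := exists_zpow_or_zpow_mul_s12 x
    · obtain ⟨j, rfl⟩ := (zpow_s12_mul_s13_mem_ker_piJ3_iff n).1 hx
      exact ⟨j, rfl⟩
    · exact absurd hx (zpow_s12_mul_s13_mul_s12_notMem_ker_piJ3 n)
  · ext
    simp only [mul_add, zpow_add, Subgroup.coe_mul]
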